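/- arXiv:2205.05913 — 5 statements merged into one kernel-verified Lean document; each statement's English description precedes it below -/
import Mathlib

section
/- Assume the map p' ↦ δ₁(p', s) is differentiable at p, g is differentiable at (p*, s), the preconditioning identity g(p' + δ₁(p', s), s) = 0 holds for all p' in a neighborhood of p, and ∂_p g(p*, s) is a bijective continuous linear map. Then the partial Fréchet derivative of δ₁ with respect to the pressure variable satisfies ∂_p δ₁(p, s) = -id_E. -/
open Filter Topology

section

variable {𝕜 E F G : Type*} [NontriviallyNormedField 𝕜]
  [NormedAddCommGroup E] [NormedSpace 𝕜 E] [NormedAddCommGroup F] [NormedSpace 𝕜 F]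
  [NormedAddCommGroup G] [NormedSpace 𝕜 G]

theorem fderiv_eq_zero_of_comp_eventually_const {f : F → G} {u : E → F} {x : E} {c : G}
    (hf : DifferentiableAt 𝕜 f (u x)) (hu : DifferentiableAt 𝕜 u x)
    (hinj : Function.Injective (fderiv 𝕜 f (u x))) (hconst : f ∘ u =ᶠ[𝓝 x] fun _ => c) :
    fderiv 𝕜 u x = 0 := by
  have hcomp : fderiv 𝕜 f (u x) ∘L fderiv 𝕜 u x = 0 := by
    rw [← fderiv_comp x hf hu, hconst.fderiv_eq, fderiv_const_apply]
  ext v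
  exact hinj (by simpa using congr($hcomp v))

end

theorem fsmsn_ddelta1_dp_general {E : Type*} [NormedAddCommGroup E] [NormedSpace ℝ E]
    (g δ₁ : E × E → E) (p s : E)
    (hδ₁ : DifferentiableAt ℝ (fun p' => δ₁ (p', s)) p)
    (hg : DifferentiableAt ℝ g (p + δ₁ (p, s), s))
    (hid : ∀ᶠ p' in nhds p, g (p' + δ₁ (p', s), s) = 0)
    (hbij : Function.Bijective ⇑(fderiv ℝ (fun x => g (x, s)) (p + δ₁ (p, s)))) :
    fderiv ℝ (fun p' => δ₁ (p', s)) p = -ContinuousLinearMap.id ℝ E := by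
  have hgp : DifferentiableAt ℝ (fun x => g (x, s)) (p + δ₁ (p, s)) :=
    hg.comp (p + δ₁ (p, s)) (differentiableAt_id.prodMk (differentiableAt_const s))
  have hshift : fderiv ℝ (fun p' => p' + δ₁ (p', s)) p = 0 :=
    fderiv_eq_zero_of_comp_eventually_const hgp (differentiableAt_id.add hδ₁) hbij.injective hid
  rw [fderiv_fun_add differentiableAt_fun_id hδ₁, fderiv_fun_id] at hshift
  exact eq_neg_of_add_eq_zero_right hshift

/-- In the field-split preconditioning setting, if `p' ↦ δ₁(p', s)` is
differentiable at `p`, `g` is differentiable at `(p*, s)` with `p* := p + δ₁(p, s)`,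
the preconditioning identity `g(p' + δ₁(p', s), s) = 0` holds for all `p'` near `p`, and
`∂_p g(p*, s)` is a bijective continuous linear map, then `∂_p δ₁(p, s) = -id`. -/
theorem fsmsn_ddelta1_dp {E : Type*} [NormedAddCommGroup E] [NormedSpace ℝ E]
    [FiniteDimensional ℝ E]
    (g δ₁ : E × E → E) (p s : E)
    (hδ₁ : DifferentiableAt ℝ (fun p' => δ₁ (p', s)) p)
    (hg : DifferentiableAt ℝ g (p + δ₁ (p, s), s))
    (hid : ∀ᶠ p' in nhds p, g (p' + δ₁ (p', s), s) = 0)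
    (hbij : Function.Bijective ⇑(fderiv ℝ (fun x => g (x, s)) (p + δ₁ (p, s)))) :
    fderiv ℝ (fun p' => δ₁ (p', s)) p = -ContinuousLinearMap.id ℝ E :=
  fsmsn_ddelta1_dp_general g δ₁ p s hδ₁ hg hid hbij
end

section
/- Assume the maps p' ↦ δ₁(p', s) and p' ↦ δ₂(p', s) are differentiable at p, that g is differentiable at (p*, s) with ∂_p g(p*, s) a bijective continuous linear map, that h is differentiable at (p*, s*) with ∂_s h(p*, s*) a bijective continuous linear map, and that the preconditioning identities g(p' + δ₁(p', s), s) = 0 and h(p' + δ₁(p', s), s + δ₂(p', s)) = 0 hold for all p' in a neighborhood of p. Then the partial Fréchet derivative of δ₂ with respect to the pressure variable vanishes: ∂_p δ₂(p, s) = 0. -/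
/-!
Differentiate the two preconditioning identities in `p'` at `p`. The first gives
`∂_p g(p*, s) ∘ (1 + ∂_p δ₁) = 0`, so `1 + ∂_p δ₁ = 0` by injectivity of `∂_p g(p*, s)`: the
pressure `p' + δ₁(p', s)` is stationary. Hence only the saturation argument of `h` moves in the
second identity, which gives `∂_s h(p*, s*) ∘ ∂_p δ₂ = 0`, so `∂_p δ₂ = 0` by injectivity of
`∂_s h(p*, s*)`.
-/

open Filter Topology ContinuousLinearMap

section

variable {𝕜 X E F G : Type*} [NontriviallyNormedField 𝕜]
  [NormedAddCommGroup X] [NormedSpace 𝕜 X] [NormedAddCommGroup E] [NormedSpace 𝕜 E]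
  [NormedAddCommGroup F] [NormedSpace 𝕜 F] [NormedAddCommGroup G] [NormedSpace 𝕜 G]

theorem eq_zero_of_hasFDerivAt_comp_of_eventuallyEq_zero {f : X → G} {A : F →L[𝕜] G}
    {u : X →L[𝕜] F} {x : X} (hf : HasFDerivAt f (A.comp u) x) (hA : Function.Injective A)
    (h0 : ∀ᶠ y in 𝓝 x, f y = 0) : u = 0 := by
  have hAu : A.comp u = 0 := hf.unique ((hasFDerivAt_const 0 x).congr_of_eventuallyEq h0)
  ext v
  exact hA (by simpa using congr($hAu v))

theorem DifferentiableAt.hasFDerivAt_comp_prodMk_of_hasFDerivAt_fst_zero {φ : E × F → G}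
    {a : X → E} {b : X → F} {b' : X →L[𝕜] F} {x : X} (hφ : DifferentiableAt 𝕜 φ (a x, b x))
    (ha : HasFDerivAt a (0 : X →L[𝕜] E) x) (hb : HasFDerivAt b b' x) :
    HasFDerivAt (fun y => φ (a y, b y)) ((fderiv 𝕜 (fun z => φ (a x, z)) (b x)).comp b') x := by
  have hpartial :
      fderiv 𝕜 (fun z => φ (a x, z)) (b x) = (fderiv 𝕜 φ (a x, b x)).comp (inr 𝕜 E F) :=
    (hφ.hasFDerivAt.comp (b x) (hasFDerivAt_prodMk_right (𝕜 := 𝕜) (a x) (b x))).fderiv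
  have hinr : (inr 𝕜 E F).comp b' = (0 : X →L[𝕜] E).prod b' := by ext v <;> simp
  rw [hpartial, comp_assoc, hinr]
  exact hφ.hasFDerivAt.comp x (ha.prodMk hb)

end

theorem fsmsn_ddelta2_dp_general {E : Type*} [NormedAddCommGroup E] [NormedSpace ℝ E]
    (g h δ₁ δ₂ : E × E → E) (p s : E)
    (hδ₁ : DifferentiableAt ℝ (fun p' => δ₁ (p', s)) p)
    (hδ₂ : DifferentiableAt ℝ (fun p' => δ₂ (p', s)) p)
    (hg : DifferentiableAt ℝ g (p + δ₁ (p, s), s))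
    (hgbij : Function.Bijective ⇑(fderiv ℝ (fun x => g (x, s)) (p + δ₁ (p, s))))
    (hh : DifferentiableAt ℝ h (p + δ₁ (p, s), s + δ₂ (p, s)))
    (hhbij : Function.Bijective
      ⇑(fderiv ℝ (fun y => h (p + δ₁ (p, s), y)) (s + δ₂ (p, s))))
    (hidg : ∀ᶠ p' in nhds p, g (p' + δ₁ (p', s), s) = 0)
    (hidh : ∀ᶠ p' in nhds p, h (p' + δ₁ (p', s), s + δ₂ (p', s)) = 0) :
    fderiv ℝ (fun p' => δ₂ (p', s)) p = 0 := by
  have hpressure : HasFDerivAt (fun p' => p' + δ₁ (p', s))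
      (ContinuousLinearMap.id ℝ E + fderiv ℝ (fun p' => δ₁ (p', s)) p) p :=
    (hasFDerivAt_id p).add hδ₁.hasFDerivAt
  have hgx : HasFDerivAt (fun x => g (x, s)) (fderiv ℝ (fun x => g (x, s)) (p + δ₁ (p, s)))
      (p + δ₁ (p, s)) :=
    (hg.hasFDerivAt.comp (p + δ₁ (p, s))
      (hasFDerivAt_prodMk_left (p + δ₁ (p, s)) s)).differentiableAt.hasFDerivAt
  have hstationary : ContinuousLinearMap.id ℝ E + fderiv ℝ (fun p' => δ₁ (p', s)) p = 0 :=
    eq_zero_of_hasFDerivAt_comp_of_eventuallyEq_zero (hgx.comp (g := fun x => g (x, s)) p hpressure)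
      hgbij.injective hidg
  exact eq_zero_of_hasFDerivAt_comp_of_eventuallyEq_zero
    (hh.hasFDerivAt_comp_prodMk_of_hasFDerivAt_fst_zero (hstationary ▸ hpressure)
      (hδ₂.hasFDerivAt.const_add s))
    hhbij.injective hidh

/-- In the field-split preconditioning setting, if `p' ↦ δ₁(p', s)` and
`p' ↦ δ₂(p', s)` are differentiable at `p`, `g` is differentiable at `(p*, s)` with
`∂_p g(p*, s)` bijective, `h` is differentiable at `(p*, s*)` with `∂_s h(p*, s*)` bijective
(where `p* := p + δ₁(p, s)`, `s* := s + δ₂(p, s)`), and the preconditioning identities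
`g(p' + δ₁(p', s), s) = 0` and `h(p' + δ₁(p', s), s + δ₂(p', s)) = 0` hold for all `p'`
near `p`, then `∂_p δ₂(p, s) = 0`. -/
theorem fsmsn_ddelta2_dp {E : Type*} [NormedAddCommGroup E] [NormedSpace ℝ E]
    [FiniteDimensional ℝ E]
    (g h δ₁ δ₂ : E × E → E) (p s : E)
    (hδ₁ : DifferentiableAt ℝ (fun p' => δ₁ (p', s)) p)
    (hδ₂ : DifferentiableAt ℝ (fun p' => δ₂ (p', s)) p)
    (hg : DifferentiableAt ℝ g (p + δ₁ (p, s), s))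
    (hgbij : Function.Bijective ⇑(fderiv ℝ (fun x => g (x, s)) (p + δ₁ (p, s))))
    (hh : DifferentiableAt ℝ h (p + δ₁ (p, s), s + δ₂ (p, s)))
    (hhbij : Function.Bijective
      ⇑(fderiv ℝ (fun y => h (p + δ₁ (p, s), y)) (s + δ₂ (p, s))))
    (hidg : ∀ᶠ p' in nhds p, g (p' + δ₁ (p', s), s) = 0)
    (hidh : ∀ᶠ p' in nhds p, h (p' + δ₁ (p', s), s + δ₂ (p', s)) = 0) :
    fderiv ℝ (fun p' => δ₂ (p', s)) p = 0 :=
  fsmsn_ddelta2_dp_general g h δ₁ δ₂ p s hδ₁ hδ₂ hg hgbij hh hhbij hidg hidh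
end

section
/- Assume the maps s' ↦ δ₁(p, s') and s' ↦ δ₂(p, s') are differentiable at s, that g is differentiable at (p*, s) with A := ∂_p g(p*, s) a bijective continuous linear map, that h is differentiable at (p*, s*) with C := ∂_s h(p*, s*) a bijective continuous linear map, and that the preconditioning identities g(p + δ₁(p, s'), s') = 0 and h(p + δ₁(p, s'), s' + δ₂(p, s')) = 0 hold for all s' in a neighborhood of s. Then the partial Fréchet derivative of δ₂ with respect to the saturation variable satisfies ∂_s δ₂(p, s) = -id_E + C⁻¹ ∘ ∂_p h(p*, s*) ∘ A⁻¹ ∘ ∂_s g(p*, s). -/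
/-!
Differentiate the two preconditioning identities along `s'` with the chain rule written in
partial derivatives. The flow identity gives `A ∘ ∂_s δ₁ + ∂_s g = 0`, the transport identity
gives `∂_p h ∘ ∂_s δ₁ + C ∘ (id + ∂_s δ₂) = 0`; inverting `A` and then `C` solves this
triangular system for `∂_s δ₂`.
-/

open ContinuousLinearMap Filter Topology

section Linearization

variable {𝕜 : Type*} [NontriviallyNormedField 𝕜]
  {X E F G : Type*} [NormedAddCommGroup X] [NormedSpace 𝕜 X] [NormedAddCommGroup E]
  [NormedSpace 𝕜 E] [NormedAddCommGroup F] [NormedSpace 𝕜 F] [NormedAddCommGroup G]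
  [NormedSpace 𝕜 G]

theorem DifferentiableAt.fderiv_comp_prodMk_left {f : E × F → G} {a : E} {b : F}
    (hf : DifferentiableAt 𝕜 f (a, b)) :
    fderiv 𝕜 (fun x => f (x, b)) a = (fderiv 𝕜 f (a, b)).comp (inl 𝕜 E F) :=
  (hf.hasFDerivAt.comp a (hasFDerivAt_prodMk_left a b)).fderiv

theorem DifferentiableAt.fderiv_comp_prodMk_right {f : E × F → G} {a : E} {b : F}
    (hf : DifferentiableAt 𝕜 f (a, b)) :
    fderiv 𝕜 (fun y => f (a, y)) b = (fderiv 𝕜 f (a, b)).comp (inr 𝕜 E F) :=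
  (hf.hasFDerivAt.comp b (hasFDerivAt_prodMk_right a b)).fderiv

theorem DifferentiableAt.hasFDerivAt_comp_prodMk {f : E × F → G} {u : X → E} {v : X → F}
    {u' : X →L[𝕜] E} {v' : X →L[𝕜] F} {x : X} (hf : DifferentiableAt 𝕜 f (u x, v x))
    (hu : HasFDerivAt u u' x) (hv : HasFDerivAt v v' x) :
    HasFDerivAt (fun y => f (u y, v y))
      ((fderiv 𝕜 (fun a => f (a, v x)) (u x)).comp u'
        + (fderiv 𝕜 (fun b => f (u x, b)) (v x)).comp v') x := by
  refine (hf.hasFDerivAt.comp x (hu.prodMk hv)).congr_fderiv ?_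
  ext w
  simp [hf.fderiv_comp_prodMk_left, hf.fderiv_comp_prodMk_right, ← map_add]

theorem DifferentiableAt.fderiv_partial_comp_add_eq_zero {f : E × F → G} {u : X → E}
    {v : X → F} {u' : X →L[𝕜] E} {v' : X →L[𝕜] F} {x : X}
    (hf : DifferentiableAt 𝕜 f (u x, v x)) (hu : HasFDerivAt u u' x) (hv : HasFDerivAt v v' x)
    (hzero : ∀ᶠ y in 𝓝 x, f (u y, v y) = 0) :
    (fderiv 𝕜 (fun a => f (a, v x)) (u x)).comp u'
      + (fderiv 𝕜 (fun b => f (u x, b)) (v x)).comp v' = 0 :=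
  (hf.hasFDerivAt_comp_prodMk hu hv).unique
    ((hasFDerivAt_const 0 x).congr_of_eventuallyEq hzero)

theorem ContinuousLinearEquiv.eq_neg_symm_comp_of_comp_add_eq_zero (A : E ≃L[𝕜] F)
    {T : G →L[𝕜] E} {B : G →L[𝕜] F} (h : (A : E →L[𝕜] F).comp T + B = 0) :
    T = -(A.symm : F →L[𝕜] E).comp B := by
  calc T = (A.symm : F →L[𝕜] E).comp ((A : E →L[𝕜] F).comp T) := by
        rw [← comp_assoc, A.coe_symm_comp_coe, id_comp]
    _ = -(A.symm : F →L[𝕜] E).comp B := by rw [eq_neg_of_add_eq_zero_left h, comp_neg]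

end Linearization

theorem fsmsn_ddelta2_ds_general {E : Type*} [NormedAddCommGroup E] [NormedSpace ℝ E]
    (g h δ₁ δ₂ : E × E → E) (p s : E)
    (pstar sstar : E)
    (hpstar : pstar = p + δ₁ (p, s)) (hsstar : sstar = s + δ₂ (p, s))
    (hδ₁ : DifferentiableAt ℝ (fun s' => δ₁ (p, s')) s)
    (hδ₂ : DifferentiableAt ℝ (fun s' => δ₂ (p, s')) s)
    (hg : DifferentiableAt ℝ g (pstar, s))
    (hh : DifferentiableAt ℝ h (pstar, sstar))
    (A : E ≃L[ℝ] E) (hA : (A : E →L[ℝ] E) = fderiv ℝ (fun x => g (x, s)) pstar)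
    (C : E ≃L[ℝ] E) (hC : (C : E →L[ℝ] E) = fderiv ℝ (fun y => h (pstar, y)) sstar)
    (hidg : ∀ᶠ s' in nhds s, g (p + δ₁ (p, s'), s') = 0)
    (hidh : ∀ᶠ s' in nhds s, h (p + δ₁ (p, s'), s' + δ₂ (p, s')) = 0) :
    fderiv ℝ (fun s' => δ₂ (p, s')) s
      = -ContinuousLinearMap.id ℝ E
        + (C.symm : E →L[ℝ] E).comp
            ((fderiv ℝ (fun x => h (x, sstar)) pstar).comp
              ((A.symm : E →L[ℝ] E).comp (fderiv ℝ (fun y => g (pstar, y)) s))) := by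
  subst hpstar hsstar
  have hpδ₁ : HasFDerivAt (fun s' => p + δ₁ (p, s')) (fderiv ℝ (fun s' => δ₁ (p, s')) s) s :=
    hδ₁.hasFDerivAt.const_add p
  have hs : HasFDerivAt (fun s' : E => s') (ContinuousLinearMap.id ℝ E) s := hasFDerivAt_id s
  have hflow := hg.fderiv_partial_comp_add_eq_zero hpδ₁ hs hidg
  have hsδ₂ : HasFDerivAt (fun s' => s' + δ₂ (p, s'))
      (ContinuousLinearMap.id ℝ E + fderiv ℝ (fun s' => δ₂ (p, s')) s) s :=
    hs.add hδ₂.hasFDerivAt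
  have htransport := hh.fderiv_partial_comp_add_eq_zero hpδ₁ hsδ₂ hidh
  rw [← hA, comp_id] at hflow
  rw [← hC, add_comm] at htransport
  have hD₁ := A.eq_neg_symm_comp_of_comp_add_eq_zero hflow
  have hD₂ := C.eq_neg_symm_comp_of_comp_add_eq_zero htransport
  rw [eq_neg_add_iff_add_eq, hD₂, hD₁, comp_neg, comp_neg, neg_neg]

/-- In the field-split preconditioning setting, if `s' ↦ δ₁(p, s')` and
`s' ↦ δ₂(p, s')` are differentiable at `s`, `g` is differentiable at `(p*, s)` with
`A := ∂_p g(p*, s)` bijective, `h` is differentiable at `(p*, s*)` with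
`C := ∂_s h(p*, s*)` bijective (where `p* := p + δ₁(p, s)`, `s* := s + δ₂(p, s)`), and the
preconditioning identities `g(p + δ₁(p, s'), s') = 0` and
`h(p + δ₁(p, s'), s' + δ₂(p, s')) = 0` hold for all `s'` near `s`, then
`∂_s δ₂(p, s) = -id + C⁻¹ ∘ ∂_p h(p*, s*) ∘ A⁻¹ ∘ ∂_s g(p*, s)`. -/
theorem fsmsn_ddelta2_ds {E : Type*} [NormedAddCommGroup E] [NormedSpace ℝ E]
    [FiniteDimensional ℝ E]
    (g h δ₁ δ₂ : E × E → E) (p s : E)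
    (pstar sstar : E)
    (hpstar : pstar = p + δ₁ (p, s)) (hsstar : sstar = s + δ₂ (p, s))
    (hδ₁ : DifferentiableAt ℝ (fun s' => δ₁ (p, s')) s)
    (hδ₂ : DifferentiableAt ℝ (fun s' => δ₂ (p, s')) s)
    (hg : DifferentiableAt ℝ g (pstar, s))
    (hh : DifferentiableAt ℝ h (pstar, sstar))
    (A : E ≃L[ℝ] E) (hA : (A : E →L[ℝ] E) = fderiv ℝ (fun x => g (x, s)) pstar)
    (C : E ≃L[ℝ] E) (hC : (C : E →L[ℝ] E) = fderiv ℝ (fun y => h (pstar, y)) sstar)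
    (hidg : ∀ᶠ s' in nhds s, g (p + δ₁ (p, s'), s') = 0)
    (hidh : ∀ᶠ s' in nhds s, h (p + δ₁ (p, s'), s' + δ₂ (p, s')) = 0) :
    fderiv ℝ (fun s' => δ₂ (p, s')) s
      = -ContinuousLinearMap.id ℝ E
        + (C.symm : E →L[ℝ] E).comp
            ((fderiv ℝ (fun x => h (x, sstar)) pstar).comp
              ((A.symm : E →L[ℝ] E).comp (fderiv ℝ (fun y => g (pstar, y)) s))) :=
  fsmsn_ddelta2_ds_general g h δ₁ δ₂ p s pstar sstar hpstar hsstar hδ₁ hδ₂ hg hh A hA C hC hidg hidh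
end

section
/- Let F := (δ₁, δ₂) : E × E → E × E be the preconditioned residual map and assume F is differentiable at (p, s), g is differentiable at (p*, s), h is differentiable at (p*, s*), and the preconditioning identities hold in a neighborhood of (p, s). Then the derivative DF(p, s) satisfies the block identity L ∘ DF(p, s) = -M, that is: for every (dp, ds) ∈ E × E, writing (d₁, d₂) := DF(p, s)(dp, ds), one has ∂_p g(p*, s)(d₁) = -(∂_p g(p*, s)(dp) + ∂_s g(p*, s)(ds)) and ∂_p h(p*, s*)(d₁) + ∂_s h(p*, s*)(d₂) = -(∂_p h(p*, s*)(dp) + ∂_s h(p*, s*)(ds)), where L is the block lower-triangular operator L(a, b) := (∂_p g(p*, s)(a), ∂_p h(p*, s*)(a) + ∂_s h(p*, s*)(b)) and M is the full block operator M(a, b) := (∂_p g(p*, s)(a) + ∂_s g(p*, s)(b), ∂_p h(p*, s*)(a) + ∂_s h(p*, s*)(b)). -/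
/-!
Both preconditioning identities have the form `r (x + ψ x) = 0` near `(p, s)`, with
`ψ = (δ₁, 0)` for `r = g` and `ψ = F` for `r = h`. Differentiating by the chain rule gives
`Dr ∘ (I + Dψ) = 0`, i.e. `Dr ∘ Dψ = -Dr`, and splitting the total derivatives `Dg`, `Dh` into
their partial derivatives in `p` and `s` yields the two block rows of `L ∘ DF = -M`.
-/

open Filter Topology ContinuousLinearMap

section

variable {𝕜 : Type*} [NontriviallyNormedField 𝕜]
  {E F G : Type*} [NormedAddCommGroup E] [NormedSpace 𝕜 E] [NormedAddCommGroup F]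
  [NormedSpace 𝕜 F] [NormedAddCommGroup G] [NormedSpace 𝕜 G]

theorem DifferentiableAt.fderiv_apply_eq_fderiv_left_add_fderiv_right {g : E × F → G}
    {a : E} {b : F} (hg : DifferentiableAt 𝕜 g (a, b)) (u : E) (w : F) :
    fderiv 𝕜 g (a, b) (u, w) =
      fderiv 𝕜 (fun x => g (x, b)) a u + fderiv 𝕜 (fun y => g (a, y)) b w := by
  have hleft : HasFDerivAt (fun x => g (x, b)) (fderiv 𝕜 g (a, b) ∘L inl 𝕜 E F) a :=
    hg.hasFDerivAt.comp a (hasFDerivAt_prodMk_left a b)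
  have hright : HasFDerivAt (fun y => g (a, y)) (fderiv 𝕜 g (a, b) ∘L inr 𝕜 E F) b :=
    hg.hasFDerivAt.comp b (hasFDerivAt_prodMk_right a b)
  rw [hleft.fderiv, hright.fderiv]
  exact ((fderiv 𝕜 g (a, b)).comp_inl_add_comp_inr (u, w)).symm

theorem HasFDerivAt.comp_eq_neg_of_eventually_apply_add_eq_zero {g : E → G} {ψ : E → E}
    {g' : E →L[𝕜] G} {ψ' : E →L[𝕜] E} {x : E} (hg : HasFDerivAt g g' (x + ψ x))
    (hψ : HasFDerivAt ψ ψ' x) (hzero : ∀ᶠ y in 𝓝 x, g (y + ψ y) = 0) :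
    g' ∘L ψ' = -g' := by
  have hcomp : HasFDerivAt (fun y => g (y + ψ y)) (g' ∘L (ContinuousLinearMap.id 𝕜 E + ψ')) x :=
    hg.comp x ((hasFDerivAt_id x).add hψ)
  have hconst : HasFDerivAt (fun y => g (y + ψ y)) (0 : E →L[𝕜] G) x :=
    (hasFDerivAt_const 0 x).congr_of_eventuallyEq hzero
  rw [eq_neg_iff_add_eq_zero, add_comm, ← hcomp.unique hconst, comp_add, comp_id]

end

theorem mspin_jacobian_block_identity_general {E : Type*} [NormedAddCommGroup E] [NormedSpace ℝ E]
    (g h δ₁ δ₂ : E × E → E) (p s : E)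
    (pstar sstar : E)
    (hpstar : pstar = p + δ₁ (p, s)) (hsstar : sstar = s + δ₂ (p, s))
    (F : E × E → E × E) (hF : ∀ x, F x = (δ₁ x, δ₂ x))
    (hFdiff : DifferentiableAt ℝ F (p, s))
    (hg : DifferentiableAt ℝ g (pstar, s))
    (hh : DifferentiableAt ℝ h (pstar, sstar))
    (hidg : ∀ᶠ x in nhds (p, s), g (x.1 + δ₁ x, x.2) = 0)
    (hidh : ∀ᶠ x in nhds (p, s), h (x.1 + δ₁ x, x.2 + δ₂ x) = 0) :
    ∀ dp ds : E,
      fderiv ℝ (fun x => g (x, s)) pstar ((fderiv ℝ F (p, s) (dp, ds)).1)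
        = -(fderiv ℝ (fun x => g (x, s)) pstar dp
            + fderiv ℝ (fun y => g (pstar, y)) s ds)
      ∧ fderiv ℝ (fun x => h (x, sstar)) pstar ((fderiv ℝ F (p, s) (dp, ds)).1)
          + fderiv ℝ (fun y => h (pstar, y)) sstar ((fderiv ℝ F (p, s) (dp, ds)).2)
        = -(fderiv ℝ (fun x => h (x, sstar)) pstar dp
            + fderiv ℝ (fun y => h (pstar, y)) sstar ds) := by
  intro dp ds
  have hFd := hFdiff.hasFDerivAt
  obtain rfl : F = fun x => (δ₁ x, δ₂ x) := funext hF
  set DF := fderiv ℝ (fun x => (δ₁ x, δ₂ x)) (p, s)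
  have hψg : HasFDerivAt (fun x => (δ₁ x, (0 : E))) ((fst ℝ E E ∘L DF).prod 0) (p, s) :=
    hFd.fst.prodMk (hasFDerivAt_const 0 _)
  have hg' : HasFDerivAt g (fderiv ℝ g (pstar, s)) ((p, s) + (δ₁ (p, s), 0)) := by
    simpa [hpstar] using hg.hasFDerivAt
  have hh' : HasFDerivAt h (fderiv ℝ h (pstar, sstar)) ((p, s) + (δ₁ (p, s), δ₂ (p, s))) := by
    simpa [hpstar, hsstar] using hh.hasFDerivAt
  have hgDF := congr($(hg'.comp_eq_neg_of_eventually_apply_add_eq_zero hψg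
    (by filter_upwards [hidg] with ⟨x₁, x₂⟩ hx; simpa using hx)) (dp, ds))
  have hhDF := congr($(hh'.comp_eq_neg_of_eventually_apply_add_eq_zero hFd
    (by filter_upwards [hidh] with ⟨x₁, x₂⟩ hx; simpa using hx)) (dp, ds))
  simp only [comp_apply, prod_apply, neg_apply, zero_apply, coe_fst'] at hgDF hhDF
  rw [hg.fderiv_apply_eq_fderiv_left_add_fderiv_right,
    hg.fderiv_apply_eq_fderiv_left_add_fderiv_right, map_zero, add_zero] at hgDF
  rw [hh.fderiv_apply_eq_fderiv_left_add_fderiv_right,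
    hh.fderiv_apply_eq_fderiv_left_add_fderiv_right] at hhDF
  exact ⟨hgDF, hhDF⟩

/-- Let `F := (δ₁, δ₂)` be the preconditioned residual map, differentiable
at `(p, s)`; let `g` be differentiable at `(p*, s)` and `h` at `(p*, s*)` (where
`p* := p + δ₁(p, s)`, `s* := s + δ₂(p, s)`), and suppose the preconditioning identities
hold in a neighborhood of `(p, s)`. Then `L ∘ DF(p, s) = -M`: for every `(dp, ds)`, writing
`(d₁, d₂) := DF(p, s)(dp, ds)`, one has
`∂_p g(p*, s)(d₁) = -(∂_p g(p*, s)(dp) + ∂_s g(p*, s)(ds))` and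
`∂_p h(p*, s*)(d₁) + ∂_s h(p*, s*)(d₂) = -(∂_p h(p*, s*)(dp) + ∂_s h(p*, s*)(ds))`. -/
theorem mspin_jacobian_block_identity {E : Type*} [NormedAddCommGroup E] [NormedSpace ℝ E]
    [FiniteDimensional ℝ E]
    (g h δ₁ δ₂ : E × E → E) (p s : E)
    (pstar sstar : E)
    (hpstar : pstar = p + δ₁ (p, s)) (hsstar : sstar = s + δ₂ (p, s))
    (F : E × E → E × E) (hF : ∀ x, F x = (δ₁ x, δ₂ x))
    (hFdiff : DifferentiableAt ℝ F (p, s))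
    (hg : DifferentiableAt ℝ g (pstar, s))
    (hh : DifferentiableAt ℝ h (pstar, sstar))
    (hidg : ∀ᶠ x in nhds (p, s), g (x.1 + δ₁ x, x.2) = 0)
    (hidh : ∀ᶠ x in nhds (p, s), h (x.1 + δ₁ x, x.2 + δ₂ x) = 0) :
    ∀ dp ds : E,
      fderiv ℝ (fun x => g (x, s)) pstar ((fderiv ℝ F (p, s) (dp, ds)).1)
        = -(fderiv ℝ (fun x => g (x, s)) pstar dp
            + fderiv ℝ (fun y => g (pstar, y)) s ds)
      ∧ fderiv ℝ (fun x => h (x, sstar)) pstar ((fderiv ℝ F (p, s) (dp, ds)).1)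
          + fderiv ℝ (fun y => h (pstar, y)) sstar ((fderiv ℝ F (p, s) (dp, ds)).2)
        = -(fderiv ℝ (fun x => h (x, sstar)) pstar dp
            + fderiv ℝ (fun y => h (pstar, y)) sstar ds) :=
  mspin_jacobian_block_identity_general g h δ₁ δ₂ p s pstar sstar hpstar hsstar F hF hFdiff hg hh
    hidg hidh
end

section
/- Let F := (δ₁, δ₂) : E × E → E × E be the preconditioned residual map and r := (g, h) : E × E → E × E the unpreconditioned residual map. Assume F is differentiable at (p, s), g and h are differentiable at (p*, s), the preconditioning identities hold in a neighborhood of (p, s), and additionally δ₂(p, s) = 0 (so that s* = s). Then the exact preconditioned Jacobian identity coincides with the MSPIN approximation: for every (dp, ds) ∈ E × E, L(DF(p, s)(dp, ds)) = -Dr(p*, s)(dp, ds), where Dr(p*, s) is the Fréchet derivative of r at (p*, s) and L is the block lower-triangular operator L(a, b) := (∂_p g(p*, s)(a), ∂_p h(p*, s)(a) + ∂_s h(p*, s)(b)). In particular, if L is a bijective continuous linear map, then DF(p, s) = -L⁻¹ ∘ Dr(p*, s). -/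
/-!
Differentiating the flow identity `g (p' + δ₁, s') = 0` and the transport identity
`h (p' + δ₁, s' + δ₂) = 0` at `(p, s)` with the chain rule gives
`Dg (Dδ₁ v, 0) = -Dg v` and `Dh (Dδ₁ v, Dδ₂ v) = -Dh v`, both derivatives taken at the corrected
point, which is `(p*, s)` because `δ₂ (p, s) = 0`. Splitting `Dg` and `Dh` into partial derivatives
turns these two identities into the two block rows of `L ∘ DF = -Dr`.
-/

open Filter Topology

section PartialDerivatives

variable {𝕜 : Type*} [NontriviallyNormedField 𝕜]
  {E F G : Type*} [NormedAddCommGroup E] [NormedSpace 𝕜 E] [NormedAddCommGroup F]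
  [NormedSpace 𝕜 F] [NormedAddCommGroup G] [NormedSpace 𝕜 G]
  {f : E × F → G} {a : E} {b : F}

theorem DifferentiableAt.fderiv_partial_fst_apply (hf : DifferentiableAt 𝕜 f (a, b)) (u : E) :
    fderiv 𝕜 (fun x => f (x, b)) a u = fderiv 𝕜 f (a, b) (u, 0) := by
  have hpartial : HasFDerivAt (fun x => f (x, b)) _ a :=
    hf.hasFDerivAt.comp a (hasFDerivAt_prodMk_left a b)
  exact DFunLike.congr_fun hpartial.fderiv u

theorem DifferentiableAt.fderiv_partial_snd_apply (hf : DifferentiableAt 𝕜 f (a, b)) (w : F) :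
    fderiv 𝕜 (fun y => f (a, y)) b w = fderiv 𝕜 f (a, b) (0, w) := by
  have hpartial : HasFDerivAt (fun y => f (a, y)) _ b :=
    hf.hasFDerivAt.comp b (hasFDerivAt_prodMk_right a b)
  exact DFunLike.congr_fun hpartial.fderiv w

theorem DifferentiableAt.fderiv_apply_eq_partial_add (hf : DifferentiableAt 𝕜 f (a, b))
    (u : E) (w : F) :
    fderiv 𝕜 f (a, b) (u, w)
      = fderiv 𝕜 (fun x => f (x, b)) a u + fderiv 𝕜 (fun y => f (a, y)) b w := by
  rw [hf.fderiv_partial_fst_apply, hf.fderiv_partial_snd_apply, ← map_add, Prod.mk_add_mk,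
    add_zero, zero_add]

end PartialDerivatives

section ImplicitDifferentiation

variable {𝕜 : Type*} [NontriviallyNormedField 𝕜]
  {X Y : Type*} [NormedAddCommGroup X] [NormedSpace 𝕜 X] [NormedAddCommGroup Y] [NormedSpace 𝕜 Y]

theorem HasFDerivAt.eq_zero_of_eventuallyEq_zero {f : X → Y} {f' : X →L[𝕜] Y} {x : X}
    (hf : HasFDerivAt f f' x) (h0 : f =ᶠ[𝓝 x] 0) : f' = 0 :=
  hf.unique ((hasFDerivAt_const 0 x).congr_of_eventuallyEq h0)

theorem fderiv_apply_fderiv_correction_eq_neg {G : X → Y} {δ : X → X} {x xstar : X}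
    (hxstar : x + δ x = xstar) (hG : DifferentiableAt 𝕜 G xstar) (hδ : DifferentiableAt 𝕜 δ x)
    (h0 : ∀ᶠ y in 𝓝 x, G (y + δ y) = 0) (v : X) :
    fderiv 𝕜 G xstar (fderiv 𝕜 δ x v) = -fderiv 𝕜 G xstar v := by
  subst hxstar
  have hcomp := hG.hasFDerivAt.comp x ((hasFDerivAt_id x).add hδ.hasFDerivAt)
  have hzero := congrArg (· v) (hcomp.eq_zero_of_eventuallyEq_zero h0)
  simp only [ContinuousLinearMap.comp_apply, add_apply, ContinuousLinearMap.id_apply, map_add,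
    zero_apply] at hzero
  exact eq_neg_of_add_eq_zero_right hzero

end ImplicitDifferentiation

section Preconditioning

variable {𝕜 : Type*} [NontriviallyNormedField 𝕜]
  {E F G H : Type*} [NormedAddCommGroup E] [NormedSpace 𝕜 E] [NormedAddCommGroup F]
  [NormedSpace 𝕜 F] [NormedAddCommGroup G] [NormedSpace 𝕜 G] [NormedAddCommGroup H]
  [NormedSpace 𝕜 H]

theorem jacobian_preconditioning_identity {g : E × F → G} {h : E × F → H} {δ₁ : E × F → E}
    {δ₂ : E × F → F} {p pstar : E} {s : F} (hpstar : pstar = p + δ₁ (p, s))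
    (hδ₁ : DifferentiableAt 𝕜 δ₁ (p, s)) (hδ₂ : DifferentiableAt 𝕜 δ₂ (p, s))
    (hg : DifferentiableAt 𝕜 g (pstar, s)) (hh : DifferentiableAt 𝕜 h (pstar, s))
    (hidg : ∀ᶠ x in 𝓝 (p, s), g (x.1 + δ₁ x, x.2) = 0)
    (hidh : ∀ᶠ x in 𝓝 (p, s), h (x.1 + δ₁ x, x.2 + δ₂ x) = 0) (hδ₂0 : δ₂ (p, s) = 0)
    (v : E × F) :
    fderiv 𝕜 (fun x => g (x, s)) pstar (fderiv 𝕜 δ₁ (p, s) v) = -fderiv 𝕜 g (pstar, s) v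
      ∧ fderiv 𝕜 (fun x => h (x, s)) pstar (fderiv 𝕜 δ₁ (p, s) v)
          + fderiv 𝕜 (fun y => h (pstar, y)) s (fderiv 𝕜 δ₂ (p, s) v)
        = -fderiv 𝕜 h (pstar, s) v := by
  rw [hg.fderiv_partial_fst_apply, ← hh.fderiv_apply_eq_partial_add]
  constructor
  · have hflow := fderiv_apply_fderiv_correction_eq_neg (δ := fun x => (δ₁ x, (0 : F)))
      (by simp [hpstar]) hg (hδ₁.prodMk (differentiableAt_const 0))
      (hidg.mono fun x hx => by simpa [Prod.add_def] using hx) v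
    rwa [hδ₁.fderiv_prodMk (differentiableAt_const 0), fderiv_const_apply] at hflow
  · have htransport := fderiv_apply_fderiv_correction_eq_neg (δ := fun x => (δ₁ x, δ₂ x))
      (by simp [hpstar, hδ₂0]) hh (hδ₁.prodMk hδ₂)
      (hidh.mono fun x hx => by simpa [Prod.add_def] using hx) v
    rwa [hδ₁.fderiv_prodMk hδ₂] at htransport

end Preconditioning

theorem mspin_approximation_exact_general {E : Type*} [NormedAddCommGroup E] [NormedSpace ℝ E]
    (g h δ₁ δ₂ : E × E → E) (p s : E)
    (pstar : E) (hpstar : pstar = p + δ₁ (p, s))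
    (F r : E × E → E × E)
    (hF : ∀ x, F x = (δ₁ x, δ₂ x)) (hr : ∀ x, r x = (g x, h x))
    (hFdiff : DifferentiableAt ℝ F (p, s))
    (hg : DifferentiableAt ℝ g (pstar, s))
    (hh : DifferentiableAt ℝ h (pstar, s))
    (hidg : ∀ᶠ x in nhds (p, s), g (x.1 + δ₁ x, x.2) = 0)
    (hidh : ∀ᶠ x in nhds (p, s), h (x.1 + δ₁ x, x.2 + δ₂ x) = 0)
    (hδ₂0 : δ₂ (p, s) = 0) :
    (∀ dp ds : E,
        fderiv ℝ (fun x => g (x, s)) pstar ((fderiv ℝ F (p, s) (dp, ds)).1)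
          = -(fderiv ℝ r (pstar, s) (dp, ds)).1
      ∧ fderiv ℝ (fun x => h (x, s)) pstar ((fderiv ℝ F (p, s) (dp, ds)).1)
          + fderiv ℝ (fun y => h (pstar, y)) s ((fderiv ℝ F (p, s) (dp, ds)).2)
          = -(fderiv ℝ r (pstar, s) (dp, ds)).2)
    ∧ ∀ L : (E × E) ≃L[ℝ] (E × E),
        (∀ a b : E, L (a, b) = (fderiv ℝ (fun x => g (x, s)) pstar a,
            fderiv ℝ (fun x => h (x, s)) pstar a
              + fderiv ℝ (fun y => h (pstar, y)) s b)) →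
        fderiv ℝ F (p, s)
          = -((L.symm : (E × E) →L[ℝ] (E × E)).comp (fderiv ℝ r (pstar, s))) := by
  obtain rfl : F = fun x => (δ₁ x, δ₂ x) := funext hF
  obtain rfl : r = fun x => (g x, h x) := funext hr
  have hδ₁ : DifferentiableAt ℝ δ₁ (p, s) := hFdiff.fst
  have hδ₂ : DifferentiableAt ℝ δ₂ (p, s) := hFdiff.snd
  have jacobian := jacobian_preconditioning_identity hpstar hδ₁ hδ₂ hg hh hidg hidh hδ₂0
  rw [hδ₁.fderiv_prodMk hδ₂, hg.fderiv_prodMk hh]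
  refine ⟨fun dp ds => jacobian (dp, ds), fun L hL => ContinuousLinearMap.ext fun v => ?_⟩
  rw [neg_apply, ContinuousLinearMap.comp_apply, ContinuousLinearEquiv.coe_coe, ← map_neg,
    ContinuousLinearEquiv.eq_symm_apply, ContinuousLinearMap.prod_apply, hL, (jacobian v).1,
    (jacobian v).2]
  rfl

/-- Let `F := (δ₁, δ₂)` be the preconditioned residual map and
`r := (g, h)` the unpreconditioned one. Assume `F` is differentiable at `(p, s)`, `g` and
`h` are differentiable at `(p*, s)` (where `p* := p + δ₁(p, s)`), the preconditioning
identities hold near `(p, s)`, and `δ₂(p, s) = 0` (so `s* = s`). Then for every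
`(dp, ds)`, `L(DF(p, s)(dp, ds)) = -Dr(p*, s)(dp, ds)`, where
`L(a, b) := (∂_p g(p*, s)(a), ∂_p h(p*, s)(a) + ∂_s h(p*, s)(b))`; in particular, if `L` is
a bijective continuous linear map then `DF(p, s) = -L⁻¹ ∘ Dr(p*, s)`. -/
theorem mspin_approximation_exact {E : Type*} [NormedAddCommGroup E] [NormedSpace ℝ E]
    [FiniteDimensional ℝ E]
    (g h δ₁ δ₂ : E × E → E) (p s : E)
    (pstar : E) (hpstar : pstar = p + δ₁ (p, s))
    (F r : E × E → E × E)
    (hF : ∀ x, F x = (δ₁ x, δ₂ x)) (hr : ∀ x, r x = (g x, h x))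
    (hFdiff : DifferentiableAt ℝ F (p, s))
    (hg : DifferentiableAt ℝ g (pstar, s))
    (hh : DifferentiableAt ℝ h (pstar, s))
    (hidg : ∀ᶠ x in nhds (p, s), g (x.1 + δ₁ x, x.2) = 0)
    (hidh : ∀ᶠ x in nhds (p, s), h (x.1 + δ₁ x, x.2 + δ₂ x) = 0)
    (hδ₂0 : δ₂ (p, s) = 0) :
    (∀ dp ds : E,
        fderiv ℝ (fun x => g (x, s)) pstar ((fderiv ℝ F (p, s) (dp, ds)).1)
          = -(fderiv ℝ r (pstar, s) (dp, ds)).1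
      ∧ fderiv ℝ (fun x => h (x, s)) pstar ((fderiv ℝ F (p, s) (dp, ds)).1)
          + fderiv ℝ (fun y => h (pstar, y)) s ((fderiv ℝ F (p, s) (dp, ds)).2)
          = -(fderiv ℝ r (pstar, s) (dp, ds)).2)
    ∧ ∀ L : (E × E) ≃L[ℝ] (E × E),
        (∀ a b : E, L (a, b) = (fderiv ℝ (fun x => g (x, s)) pstar a,
            fderiv ℝ (fun x => h (x, s)) pstar a
              + fderiv ℝ (fun y => h (pstar, y)) s b)) →
        fderiv ℝ F (p, s)
          = -((L.symm : (E × E) →L[ℝ] (E × E)).comp (fderiv ℝ r (pstar, s))) :=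
  mspin_approximation_exact_general g h δ₁ δ₂ p s pstar hpstar F r hF hr hFdiff hg hh hidg hidh hδ₂0
end
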